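/- arXiv:1909.02545 — 5 statements merged into one kernel-verified Lean document; each statement's English description precedes it below -/
import Mathlib

section
/- Let T be a finite tree with root r and positive edge weights, and let {T_0, ..., T_{k-1}} be a compatible collection of subtrees of T. Then the intersection graph of the collection — the graph on vertex set {0, ..., k-1} in which i is adjacent to j (for i ≠ j) exactly when the vertex sets of T_i and T_j intersect — is strongly chordal. -/
open SimpleGraph

/-- Weighted distance in a connected graph: sum of edge weights along the (unique, in a tree) path. -/
noncomputable def wdist {V : Type*} (T : SimpleGraph V) (hc : T.Connected) (w : Sym2 V → ℝ)
    (u v : V) : ℝ :=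
  letI := Classical.decEq V
  (((hc.preconnected u v).some.toPath : T.Walk u v).edges.map w).sum

/-- A subtree: a nonempty set of vertices inducing a connected subgraph. -/
def IsSubtree {V : Type*} (T : SimpleGraph V) (A : Set V) : Prop :=
  A.Nonempty ∧ (T.induce A).Connected

/-- `A` is full with respect to `B`. -/
def FullWrt {V : Type*} (T : SimpleGraph V) (hc : T.Connected) (w : Sym2 V → ℝ) (r : V)
    (A B : Set V) : Prop :=
  ∀ u ∈ B, ∀ v ∈ B, wdist T hc w r u ≤ wdist T hc w r v → v ∈ A → u ∈ A

def intersectionGraph {V : Type*} {k : ℕ} (A : Fin k → Set V) : SimpleGraph (Fin k) where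
  Adj i j := i ≠ j ∧ (A i ∩ A j).Nonempty
  symm := by
    constructor
    intro i j ⟨hij, x, hx⟩
    exact ⟨hij.symm, x, hx.2, hx.1⟩
  loopless := by constructor; intro i ⟨h, _⟩; exact h rfl

/-- a chord of the cycle `c` -/
def HasChord {V : Type*} (G : SimpleGraph V) {n : ℕ} (c : ZMod n → V) : Prop :=
  ∃ i j : ZMod n, j ≠ i + 1 ∧ i ≠ j + 1 ∧ G.Adj (c i) (c j)

def IsChordal {V : Type*} (G : SimpleGraph V) : Prop :=
  ∀ (n : ℕ), 4 ≤ n → ∀ c : ZMod n → V,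
    Function.Injective c → (∀ i, G.Adj (c i) (c (i + 1))) → HasChord G c

def IsStronglyChordal {V : Type*} (G : SimpleGraph V) : Prop :=
  IsChordal G ∧
    ∀ (n : ℕ), 6 ≤ n → Even n → ∀ c : ZMod n → V,
      Function.Injective c → (∀ i, G.Adj (c i) (c (i + 1))) →
        ∃ i j : ZMod n, j ≠ i + 1 ∧ i ≠ j + 1 ∧ Odd ((j - i).val) ∧ G.Adj (c i) (c j)


section Aux

variable {V : Type*} {T : SimpleGraph V}

lemma tree_path_eq (hT : T.IsTree) {u v : V} (p q : T.Walk u v) (hp : p.IsPath) (hq : q.IsPath) :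
    p = q :=
  ((hT.existsUnique_path u v).unique hp hq)

lemma wdist_eq_path (hT : T.IsTree) (hc : T.Connected) (wt : Sym2 V → ℝ) {u v : V}
    (p : T.Walk u v) (hp : p.IsPath) :
    wdist T hc wt u v = (p.edges.map wt).sum := by
  classical
  unfold wdist
  exact congrArg (fun q : T.Walk u v => (q.edges.map wt).sum)
    (tree_path_eq hT _ p ((hc.preconnected u v).some.bypass_isPath) hp)

lemma exists_walk_in_subtree {S : Set V} (hS : (T.induce S).Connected) {u v : V}
    (hu : u ∈ S) (hv : v ∈ S) : ∃ q : T.Walk u v, ∀ z ∈ q.support, z ∈ S := by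
  obtain ⟨W⟩ := hS.preconnected ⟨u, hu⟩ ⟨v, hv⟩
  refine ⟨W.map (SimpleGraph.Embedding.induce S).toHom, ?_⟩
  intro z hz
  replace hz : z ∈ (W.map (SimpleGraph.Embedding.induce S).toHom).support := hz
  rw [SimpleGraph.Walk.support_map] at hz
  obtain ⟨z', _, rfl⟩ := List.mem_map.mp hz
  exact z'.2

lemma wdist_lt_of_mem_support (hT : T.IsTree) (hc : T.Connected) (wt : Sym2 V → ℝ)
    (hw : ∀ e ∈ T.edgeSet, 0 < wt e) {r v x : V} (p : T.Walk r v) (hp : p.IsPath)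
    (hx : x ∈ p.support) (hxv : x ≠ v) :
    wdist T hc wt r x < wdist T hc wt r v := by
  classical
  have h1 : wdist T hc wt r x = (((p.takeUntil x hx).edges).map wt).sum :=
    wdist_eq_path hT hc wt _ (hp.takeUntil hx)
  have h2 : wdist T hc wt r v = (p.edges.map wt).sum := wdist_eq_path hT hc wt p hp
  have h3 : p.edges = (p.takeUntil x hx).edges ++ (p.dropUntil x hx).edges := by
    have := congrArg SimpleGraph.Walk.edges (SimpleGraph.Walk.take_spec p hx).symm
    rwa [SimpleGraph.Walk.edges_append] at this
  have hpos : 0 < (((p.dropUntil x hx).edges).map wt).sum := by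
    apply List.sum_pos
    · intro e he
      obtain ⟨e', he', rfl⟩ := List.mem_map.mp he
      exact hw _ (SimpleGraph.Walk.edges_subset_edgeSet _ he')
    · intro hnil
      have hedges : (p.dropUntil x hx).edges = [] := List.map_eq_nil_iff.mp hnil
      have : x = v := by
        have hlen : (p.dropUntil x hx).length = 0 := by
          rw [← SimpleGraph.Walk.length_edges, hedges]; rfl
        exact SimpleGraph.Walk.eq_of_length_eq_zero hlen
      exact hxv this
  rw [h1, h2, h3, List.map_append, List.sum_append]
  linarith

lemma isPath_concat {u v x : V} {p : T.Walk u v} (hp : p.IsPath) (h : T.Adj v x)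
    (hx : x ∉ p.support) : (p.concat h).IsPath := by
  rw [SimpleGraph.Walk.isPath_def, SimpleGraph.Walk.support_concat,
    List.nodup_append]
  exact ⟨hp.support_nodup, List.nodup_singleton x, by simpa using fun (a : V) (ha : a ∈ p.support) (hax : a = x) => hx (hax ▸ ha)⟩

lemma top_on_path (hT : T.IsTree) (hc : T.Connected) (wt : Sym2 V → ℝ)
    (hw : ∀ e ∈ T.edgeSet, 0 < wt e) (r : V) {S : Set V} {mS : V}
    (hmin : ∀ y ∈ S, wdist T hc wt r mS ≤ wdist T hc wt r y) :
    ∀ {x : V} (q : T.Walk x mS), (∀ z ∈ q.support, z ∈ S) →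
      ∀ (p : T.Walk r x), p.IsPath → mS ∈ p.support := by
  classical
  intro x q
  induction q with
  | nil =>
    intro _ p hp
    exact p.end_mem_support
  | @cons a b c h q ih =>
    intro hsup p hp
    have hbS : ∀ z ∈ q.support, z ∈ S := by
      intro z hz
      exact hsup z (by rw [SimpleGraph.Walk.support_cons]; exact List.mem_cons_of_mem _ hz)
    by_cases hmem : b ∈ p.support
    · have := ih hmin hbS (p.takeUntil b hmem) (hp.takeUntil hmem)
      exact SimpleGraph.Walk.support_takeUntil_subset p hmem this
    · have hp' : (p.concat h).IsPath := isPath_concat hp h hmem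
      have := ih hmin hbS (p.concat h) hp'
      rw [SimpleGraph.Walk.support_concat] at this
      rcases List.mem_append.mp this with h' | h'
      · exact h'
      · -- c = b (mS = b), contradiction via distances
        exfalso
        have hcb : c = b := List.mem_singleton.mp h'
        subst hcb
        have haS : a ∈ S := hsup a (SimpleGraph.Walk.start_mem_support _)
        have hlt : wdist T hc wt r a < wdist T hc wt r c :=
          wdist_lt_of_mem_support hT hc wt hw (p.concat h) hp'
            (by rw [SimpleGraph.Walk.support_concat];
                exact List.mem_append.mpr (Or.inl p.end_mem_support)) h.ne
        exact absurd (hmin a haS) (not_le.mpr hlt)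

lemma top_mem (hT : T.IsTree) (wt : Sym2 V → ℝ)
    (hw : ∀ e ∈ T.edgeSet, 0 < wt e) (r : V) {Sa Sb : Set V}
    (hSa : (T.induce Sa).Connected) (hSb : (T.induce Sb).Connected)
    {ma mb : V} (hmaA : ma ∈ Sa)
    (hmina : ∀ y ∈ Sa, wdist T hT.isConnected wt r ma ≤ wdist T hT.isConnected wt r y)
    (hmbB : mb ∈ Sb)
    (hminb : ∀ y ∈ Sb, wdist T hT.isConnected wt r mb ≤ wdist T hT.isConnected wt r y)
    {x : V} (hxa : x ∈ Sa) (hxb : x ∈ Sb)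
    (hba : wdist T hT.isConnected wt r mb ≤ wdist T hT.isConnected wt r ma) : ma ∈ Sb := by
  classical
  have hc := hT.isConnected
  obtain ⟨p0⟩ := hc.preconnected r x
  set p := p0.bypass with hpdef
  have hp : p.IsPath := p0.bypass_isPath
  obtain ⟨qa, hqa⟩ := exists_walk_in_subtree hSa hxa hmaA
  have hma : ma ∈ p.support := top_on_path hT hc wt hw r hmina qa hqa p hp
  obtain ⟨qb0, hqb0⟩ := exists_walk_in_subtree hSb hxb hmbB
  have hmb : mb ∈ p.support := top_on_path hT hc wt hw r hminb qb0 hqb0 p hp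
  by_cases h : ma ∈ (p.takeUntil mb hmb).support
  · by_cases heq : ma = mb
    · rw [heq]; exact hmbB
    · exfalso
      have := wdist_lt_of_mem_support hT hc wt hw (p.takeUntil mb hmb) (hp.takeUntil hmb) h heq
      linarith
  · have hdrop : ma ∈ (p.dropUntil mb hmb).support := by
      have hsupp : p.support = (p.takeUntil mb hmb).support ++ (p.dropUntil mb hmb).support.tail := by
        conv_lhs => rw [← SimpleGraph.Walk.take_spec p hmb]
        rw [SimpleGraph.Walk.support_append]
      rw [hsupp] at hma
      rcases List.mem_append.mp hma with h' | h'
      · exact absurd h' h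
      · exact List.mem_of_mem_tail h'
    obtain ⟨qb', hqb'⟩ := exists_walk_in_subtree hSb hmbB hxb
    have hdp : p.dropUntil mb hmb = qb'.bypass :=
      tree_path_eq hT _ _ (hp.dropUntil hmb) qb'.bypass_isPath
    rw [hdp] at hdrop
    exact hqb' _ (qb'.support_bypass_subset hdrop)

end Aux

/-- The intersection graph of a compatible collection of subtrees of a
rooted, positively edge-weighted finite tree is strongly chordal. -/
theorem intersectionGraph_of_compatible_subtrees_isStronglyChordal
    {n k : ℕ} (T : SimpleGraph (Fin n)) (hT : T.IsTree) (r : Fin n)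
    (w : Sym2 (Fin n) → ℝ) (hw : ∀ e ∈ T.edgeSet, 0 < w e)
    (A : Fin k → Set (Fin n)) (hA : ∀ i, IsSubtree T (A i))
    (hcomp : ∀ i j, FullWrt T hT.isConnected w r (A i) (A j) ∨
                    FullWrt T hT.isConnected w r (A j) (A i)) :
    IsStronglyChordal (intersectionGraph A) := by
  classical
  set dd : Fin n → ℝ := wdist T hT.isConnected w r with hdd
  have hmex : ∀ i : Fin k, ∃ m, m ∈ A i ∧ ∀ y ∈ A i, dd m ≤ dd y := by
    intro i
    obtain ⟨a, ha, hamin⟩ := Set.exists_min_image (A i) dd (Set.toFinite _) (hA i).1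
    exact ⟨a, ha, hamin⟩
  choose m hmA hmmin using hmex
  -- Lemma 1'': key geometric fact
  have key : ∀ (a b : Fin k) (x : Fin n), x ∈ A a → x ∈ A b → dd (m b) ≤ dd (m a) →
      m a ∈ A b := by
    intro a b x hxa hxb hba
    exact top_mem hT w hw r (hA a).2 (hA b).2 (hmA a) (hmmin a) (hmA b) (hmmin b) hxa hxb hba
  -- Lemma 2: chain property
  have L2 : ∀ i j l : Fin k, (A i ∩ A j).Nonempty → (A i ∩ A l).Nonempty →
      dd (m j) ≤ dd (m i) → dd (m l) ≤ dd (m i) →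
      ((∀ p : Fin k, dd (m p) ≤ dd (m i) → (A p ∩ A l).Nonempty → (A p ∩ A j).Nonempty) ∨
       (∀ p : Fin k, dd (m p) ≤ dd (m i) → (A p ∩ A j).Nonempty → (A p ∩ A l).Nonempty)) := by
    intro i j l hij hil hji hli
    obtain ⟨xj, hxji, hxjj⟩ := hij
    obtain ⟨xl, hxli, hxll⟩ := hil
    have hmij : m i ∈ A j := key i j xj hxji hxjj hji
    have hmil : m i ∈ A l := key i l xl hxli hxll hli
    rcases hcomp j l with hfull | hfull
    · left
      intro p hp ⟨y, hyp, hyl⟩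
      rcases le_total (dd (m p)) (dd (m l)) with hpl | hlp
      · -- m l ∈ A p, and m l ∈ A j via fullness
        have h1 : m l ∈ A p := key l p y hyl hyp hpl
        have h2 : m l ∈ A j := hfull (m l) (hmA l) (m i) hmil hli hmij
        exact ⟨m l, h1, h2⟩
      · have h1 : m p ∈ A l := key p l y hyp hyl hlp
        have h2 : m p ∈ A j := hfull (m p) h1 (m i) hmil hp hmij
        exact ⟨m p, hmA p, h2⟩
    · right
      intro p hp ⟨y, hyp, hyj⟩
      rcases le_total (dd (m p)) (dd (m j)) with hpj | hjp
      · have h1 : m j ∈ A p := key j p y hyj hyp hpj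
        have h2 : m j ∈ A l := hfull (m j) (hmA j) (m i) hmij hji hmil
        exact ⟨m j, h1, h2⟩
      · have h1 : m p ∈ A j := key p j y hyp hyj hjp
        have h2 : m p ∈ A l := hfull (m p) h1 (m i) hmij hp hmil
        exact ⟨m p, hmA p, h2⟩
  have ne0 : ∀ (N s : ℕ), 0 < s → s < N → ((s : ℕ) : ZMod N) ≠ 0 := by
    intro N s h1 h2 h
    rw [ZMod.natCast_eq_zero_iff] at h
    exact absurd (Nat.le_of_dvd h1 h) (not_le.mpr h2)
  constructor
  · -- chordal
    intro N hN c hinj hadj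
    haveI : NeZero N := ⟨by omega⟩
    obtain ⟨t, -, ht⟩ := Finset.exists_max_image Finset.univ (fun u : ZMod N => dd (m (c u)))
      ⟨0, Finset.mem_univ 0⟩
    have e1 : (intersectionGraph A).Adj (c (t - 1)) (c t) := by
      have := hadj (t - 1); rwa [sub_add_cancel] at this
    have e2 := hadj t
    obtain ⟨x1, hx1a, hx1b⟩ := e1.2
    obtain ⟨x2, hx2a, hx2b⟩ := e2.2
    have h1 : m (c t) ∈ A (c (t - 1)) := key (c t) (c (t - 1)) x1 hx1b hx1a
      (ht _ (Finset.mem_univ _))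
    have h2 : m (c t) ∈ A (c (t + 1)) := key (c t) (c (t + 1)) x2 hx2a hx2b
      (ht _ (Finset.mem_univ _))
    refine ⟨t - 1, t + 1, ?_, ?_, ?_, m (c t), h1, h2⟩
    · intro h
      exact ne0 N 1 one_pos (by omega) (by push_cast at h ⊢; linear_combination h)
    · intro h
      exact ne0 N 3 (by norm_num) (by omega) (by push_cast at h ⊢; linear_combination -h)
    · intro h
      have heq : t - 1 = t + 1 := hinj h
      exact ne0 N 2 (by norm_num) (by omega)
        (by push_cast at heq ⊢; linear_combination -heq)
  · -- strongly chordal part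
    intro N hN _ c hinj hadj
    haveI : NeZero N := ⟨by omega⟩
    obtain ⟨t, -, ht⟩ := Finset.exists_max_image Finset.univ (fun u : ZMod N => dd (m (c u)))
      ⟨0, Finset.mem_univ 0⟩
    have e1 : (intersectionGraph A).Adj (c (t - 1)) (c t) := by
      have := hadj (t - 1); rwa [sub_add_cancel] at this
    have e2 := hadj t
    have hij : (A (c t) ∩ A (c (t - 1))).Nonempty := by
      obtain ⟨x1, hx1a, hx1b⟩ := e1.2; exact ⟨x1, hx1b, hx1a⟩
    have hil : (A (c t) ∩ A (c (t + 1))).Nonempty := e2.2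
    have hval3 : ∀ a b : ZMod N, b - a = ((3 : ℕ) : ZMod N) → Odd ((b - a).val) := by
      intro a b h
      rw [h, ZMod.val_natCast_of_lt (by omega)]
      exact ⟨1, by norm_num⟩
    rcases L2 (c t) (c (t - 1)) (c (t + 1)) hij hil (ht _ (Finset.mem_univ _))
        (ht _ (Finset.mem_univ _)) with hcase | hcase
    · have hm2 : (A (c (t + 2)) ∩ A (c (t + 1))).Nonempty := by
        obtain ⟨x, hx1, hx2⟩ := (hadj (t + 1)).2
        have h4 : t + 1 + 1 = t + 2 := by ring
        rw [h4] at hx2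
        exact ⟨x, hx2, hx1⟩
      have hres := hcase (c (t + 2)) (ht _ (Finset.mem_univ _)) hm2
      refine ⟨t - 1, t + 2, ?_, ?_, ?_, ?_, ?_⟩
      · intro h
        exact ne0 N 2 (by norm_num) (by omega) (by push_cast at h ⊢; linear_combination h)
      · intro h
        exact ne0 N 4 (by norm_num) (by omega) (by push_cast at h ⊢; linear_combination -h)
      · exact hval3 _ _ (by push_cast; ring)
      · intro h
        have heq : t - 1 = t + 2 := hinj h
        exact ne0 N 3 (by norm_num) (by omega)
          (by push_cast at heq ⊢; linear_combination -heq)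
      · exact hres.imp fun x hx => ⟨hx.2, hx.1⟩
    · have hm2 : (A (c (t - 2)) ∩ A (c (t - 1))).Nonempty := by
        obtain ⟨x, hx1, hx2⟩ := (hadj (t - 2)).2
        have h4 : t - 2 + 1 = t - 1 := by ring
        rw [h4] at hx2
        exact ⟨x, hx1, hx2⟩
      have hres := hcase (c (t - 2)) (ht _ (Finset.mem_univ _)) hm2
      refine ⟨t - 2, t + 1, ?_, ?_, ?_, ?_, ?_⟩
      · intro h
        exact ne0 N 2 (by norm_num) (by omega) (by push_cast at h ⊢; linear_combination h)
      · intro h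
        exact ne0 N 4 (by norm_num) (by omega) (by push_cast at h ⊢; linear_combination -h)
      · exact hval3 _ _ (by push_cast; ring)
      · intro h
        have heq : t - 2 = t + 1 := hinj h
        exact ne0 N 3 (by norm_num) (by omega)
          (by push_cast at heq ⊢; linear_combination -heq)
      · exact hres
end

section
/- Let M be a k×n matrix with entries in {0,1} that contains neither Δ1 = [[1,1],[0,1]] nor Δ2 = [[0,1],[1,1]] as a (not necessarily contiguous) 2×2 submatrix. Suppose rows i and j of M have at least one common column with entry 1 in both rows, and let L be the largest such column index. Then for every column index p ≤ L, M[i,p] = M[j,p]; in particular, the supports of rows i and j coincide on all columns up to and including L. -/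
/-- `M` contains `Δ₁ = [[1,1],[0,1]]` as a (not necessarily contiguous) 2×2 submatrix. -/
def HasDelta1 {k n : ℕ} (M : Fin k → Fin n → ℕ) : Prop :=
  ∃ (i j : Fin k) (k' l : Fin n), i < j ∧ k' < l ∧
    M i k' = 1 ∧ M i l = 1 ∧ M j k' = 0 ∧ M j l = 1

/-- `M` contains `Δ₂ = [[0,1],[1,1]]` as a (not necessarily contiguous) 2×2 submatrix. -/
def HasDelta2 {k n : ℕ} (M : Fin k → Fin n → ℕ) : Prop :=
  ∃ (i j : Fin k) (k' l : Fin n), i < j ∧ k' < l ∧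
    M i k' = 0 ∧ M i l = 1 ∧ M j k' = 1 ∧ M j l = 1

/-- A `1` facing a `0` left of a common `1` forms `Δ₁` or `Δ₂`, depending on which row is on top. -/
theorem eq_one_of_eq_one_of_lt_common_one {k n : ℕ} {M : Fin k → Fin n → ℕ}
    (h01 : ∀ i j, M i j = 0 ∨ M i j = 1) (hΔ1 : ¬ HasDelta1 M) (hΔ2 : ¬ HasDelta2 M)
    {i j : Fin k} (hij : i ≠ j) {p L : Fin n} (hpL : p < L) (hiL : M i L = 1) (hjL : M j L = 1)
    (hip : M i p = 1) : M j p = 1 := by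
  refine (h01 j p).resolve_left fun hjp => ?_
  rcases hij.lt_or_gt with hlt | hgt
  · exact hΔ1 ⟨i, j, p, L, hlt, hpL, hip, hiL, hjp, hjL⟩
  · exact hΔ2 ⟨j, i, p, L, hgt, hpL, hjp, hjL, hip, hiL⟩

theorem rows_agree_up_to_last_common_one_general
    {k n : ℕ} (M : Fin k → Fin n → ℕ) (h01 : ∀ i j, M i j = 0 ∨ M i j = 1)
    (hΔ1 : ¬ HasDelta1 M) (hΔ2 : ¬ HasDelta2 M)
    (i j : Fin k) (hij : i ≠ j) (L : Fin n)
    (hL : M i L = 1 ∧ M j L = 1) :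
    ∀ p : Fin n, p ≤ L → M i p = M j p := by
  intro p hp
  rcases hp.eq_or_lt with rfl | hpL
  · exact hL.1.trans hL.2.symm
  · have hij1 := eq_one_of_eq_one_of_lt_common_one h01 hΔ1 hΔ2 hij hpL hL.1 hL.2
    have hji1 := eq_one_of_eq_one_of_lt_common_one h01 hΔ1 hΔ2 hij.symm hpL hL.2 hL.1
    grind [h01 i p, h01 j p]

/-- In a 0-1 matrix avoiding `Δ₁` and `Δ₂`, if `L` is the largest column in
which rows `i` and `j` both have a `1`, then rows `i` and `j` agree in every column `p ≤ L`. -/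
theorem rows_agree_up_to_last_common_one
    {k n : ℕ} (M : Fin k → Fin n → ℕ) (h01 : ∀ i j, M i j = 0 ∨ M i j = 1)
    (hΔ1 : ¬ HasDelta1 M) (hΔ2 : ¬ HasDelta2 M)
    (i j : Fin k) (hij : i ≠ j) (L : Fin n)
    (hL : M i L = 1 ∧ M j L = 1)
    (hLmax : ∀ p : Fin n, M i p = 1 → M j p = 1 → p ≤ L) :
    ∀ p : Fin n, p ≤ L → M i p = M j p :=
  rows_agree_up_to_last_common_one_general M h01 hΔ1 hΔ2 i j hij L hL
end

section
/- Let M be a k×n matrix with entries in {0,1} that contains neither Δ1 = [[1,1],[0,1]] nor Δ2 = [[0,1],[1,1]] as a (not necessarily contiguous) 2×2 submatrix, and suppose every row of M has at least one entry equal to 1. Then the intersection graph of the rows of M — the graph on vertex set {0, ..., k-1} in which i is adjacent to j (for i ≠ j) exactly when there is a column p with M[i,p] = M[j,p] = 1 — is chordal. -/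
open SimpleGraph

/-- The intersection graph of the rows of a 0-1 matrix: `i ~ j` iff `i ≠ j` and some column
has a `1` in both rows. -/
def rowIntersectionGraph {k n : ℕ} (M : Fin k → Fin n → ℕ) : SimpleGraph (Fin k) where
  Adj i j := i ≠ j ∧ ∃ p, M i p = 1 ∧ M j p = 1
  symm := by
    constructor
    intro i j ⟨hij, p, h1, h2⟩
    exact ⟨hij.symm, p, h2, h1⟩
  loopless := by constructor; intro i ⟨h, _⟩; exact h rfl

/-- The row-intersection graph of a 0-1 matrix with no `Δ₁` or `Δ₂`
submatrix, each of whose rows contains a `1`, is chordal. -/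
theorem rowIntersectionGraph_isChordal
    {k n : ℕ} (M : Fin k → Fin n → ℕ) (h01 : ∀ i j, M i j = 0 ∨ M i j = 1)
    (hΔ1 : ¬ HasDelta1 M) (hΔ2 : ¬ HasDelta2 M)
    (hrow : ∀ i : Fin k, ∃ p : Fin n, M i p = 1) :
    IsChordal (rowIntersectionGraph M) := by
  intro N hN c hinj hadj
  -- Key: rows sharing a 1 in column l agree on all earlier columns.
  have key : ∀ i j : Fin k, ∀ l p : Fin n, M i l = 1 → M j l = 1 → p < l → M i p = M j p := by
    intro i j l p hil hjl hpl
    rcases lt_trichotomy i j with hij | hij | hij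
    · rcases h01 i p with h1 | h1 <;> rcases h01 j p with h2 | h2
      · rw [h1, h2]
      · exact absurd ⟨i, j, p, l, hij, hpl, h1, hil, h2, hjl⟩ hΔ2
      · exact absurd ⟨i, j, p, l, hij, hpl, h1, hil, h2, hjl⟩ hΔ1
      · rw [h1, h2]
    · rw [hij]
    · rcases h01 i p with h1 | h1 <;> rcases h01 j p with h2 | h2
      · rw [h1, h2]
      · exact absurd ⟨j, i, p, l, hij, hpl, h2, hjl, h1, hil⟩ hΔ1
      · exact absurd ⟨j, i, p, l, hij, hpl, h2, hjl, h1, hil⟩ hΔ2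
      · rw [h1, h2]
  -- first column where row i has a 1
  have hSne : ∀ i : Fin k, (Finset.univ.filter (fun p => M i p = 1)).Nonempty := by
    intro i
    obtain ⟨p, hp⟩ := hrow i
    exact ⟨p, by simp [hp]⟩
  set m : Fin k → Fin n :=
    fun i => (Finset.univ.filter (fun p => M i p = 1)).min' (hSne i) with hm
  have hm1 : ∀ i, M i (m i) = 1 := by
    intro i
    have := Finset.min'_mem _ (hSne i)
    simpa using this
  have hmle : ∀ i p, M i p = 1 → m i ≤ p := by
    intro i p hp
    exact Finset.min'_le _ _ (by simp [hp])
  have cross : ∀ i j : Fin k, ∀ p : Fin n, M i p = 1 → M j p = 1 → M j (m i) = 1 := by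
    intro i j p hip hjp
    rcases lt_or_eq_of_le (hmle i p hip) with h | h
    · rw [← key i j p (m i) hip hjp h]; exact hm1 i
    · rw [h]; exact hjp
  have hadjm : ∀ i j, (rowIntersectionGraph M).Adj i j → m i = m j := by
    intro i j hij
    obtain ⟨hne, p, hip, hjp⟩ := hij
    exact le_antisymm (hmle i _ (cross j i p hjp hip)) (hmle j _ (cross i j p hip hjp))
  have key2 : ∀ a b : ℕ, a < N → b < N → a ≠ b → ((a : ZMod N) ≠ (b : ZMod N)) := by
    intro a b ha hb hab h
    rw [ZMod.natCast_eq_natCast_iff, Nat.ModEq, Nat.mod_eq_of_lt ha, Nat.mod_eq_of_lt hb] at h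
    exact hab h
  refine ⟨0, 2, ?_, ?_, ?_⟩
  · have := key2 2 1 (by omega) (by omega) (by omega)
    push_cast at this
    simpa using this
  · have := key2 0 3 (by omega) (by omega) (by omega)
    push_cast at this
    have e : ((2 : ZMod N) + 1) = 3 := by ring
    rw [e]
    exact this
  · have e2 : ((0 : ZMod N) + 1 + 1) = 2 := by ring
    have hm02 : m (c 0) = m (c 2) := by
      rw [← e2]
      exact (hadjm _ _ (hadj 0)).trans (hadjm _ _ (hadj (0 + 1)))
    refine ⟨fun h => ?_, m (c 0), hm1 _, ?_⟩
    · have := key2 0 2 (by omega) (by omega) (by omega)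
      push_cast at this
      exact this (hinj h)
    · rw [hm02]; exact hm1 _
end

section
/- Let M be a k×n matrix with entries in {0,1} that contains neither Δ1 = [[1,1],[0,1]] nor Δ2 = [[0,1],[1,1]] as a (not necessarily contiguous) 2×2 submatrix, and suppose every row of M has at least one entry equal to 1. Then the intersection graph of the rows of M — the graph on vertex set {0, ..., k-1} in which i is adjacent to j (for i ≠ j) exactly when there is a column p with M[i,p] = M[j,p] = 1 — is strongly chordal. -/
open SimpleGraph

lemma cast_ne_zmod {m a b : ℕ} (ha : a < m) (hb : b < m) (hab : a ≠ b) :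
    (a : ZMod m) ≠ (b : ZMod m) := by
  intro h
  apply hab
  have := congrArg ZMod.val h
  rwa [ZMod.val_cast_of_lt ha, ZMod.val_cast_of_lt hb] at this

/-- The row-intersection graph of a 0-1 matrix with no `Δ₁` or `Δ₂`
submatrix, each of whose rows contains a `1`, is strongly chordal. -/
theorem rowIntersectionGraph_isStronglyChordal
    {k n : ℕ} (M : Fin k → Fin n → ℕ) (h01 : ∀ i j, M i j = 0 ∨ M i j = 1)
    (hΔ1 : ¬ HasDelta1 M) (hΔ2 : ¬ HasDelta2 M)
    (hrow : ∀ i : Fin k, ∃ p : Fin n, M i p = 1) :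
    IsStronglyChordal (rowIntersectionGraph M) := by
  classical
  have hne : ∀ i : Fin k, (Finset.univ.filter (fun p => M i p = 1)).Nonempty := by
    intro i; obtain ⟨p, hp⟩ := hrow i; exact ⟨p, by simp [hp]⟩
  set f : Fin k → Fin n := fun i => (Finset.univ.filter (fun p => M i p = 1)).min' (hne i)
    with hf
  have hfmem : ∀ i, M i (f i) = 1 := by
    intro i
    have := Finset.min'_mem _ (hne i)
    simpa [hf] using this
  have hfle : ∀ i p, M i p = 1 → f i ≤ p := by
    intro i p hp
    exact Finset.min'_le _ _ (by simp [hp])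
  have agree : ∀ i j : Fin k, ∀ p l : Fin n, p < l → M i l = 1 → M j l = 1 →
      M i p = 1 → M j p = 1 := by
    intro i j p l hpl hil hjl hip
    rcases h01 j p with h0 | h1
    · rcases lt_trichotomy i j with hij | hij | hij
      · exact absurd ⟨i, j, p, l, hij, hpl, hip, hil, h0, hjl⟩ hΔ1
      · rw [hij] at hip; omega
      · exact absurd ⟨j, i, p, l, hij, hpl, h0, hjl, hip, hil⟩ hΔ2
    · exact h1
  have hkey : ∀ i j l, M i l = 1 → M j l = 1 → f i = f j := by
    intro i j l hil hjl
    have hi := hfle i l hil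
    have hj := hfle j l hjl
    rcases lt_or_eq_of_le hi with h | h
    · have h1 : M j (f i) = 1 := agree i j (f i) l h hil hjl (hfmem i)
      have h2 : f j ≤ f i := hfle j _ h1
      have h3 : f j < l := lt_of_le_of_lt h2 h
      have h4 : M i (f j) = 1 := agree j i (f j) l h3 hjl hil (hfmem j)
      exact le_antisymm (hfle i _ h4) h2
    · rcases lt_or_eq_of_le hj with h' | h'
      · have h4 : M i (f j) = 1 := agree j i (f j) l h' hjl hil (hfmem j)
        have := lt_of_le_of_lt (hfle i _ h4) h'
        rw [h] at this
        exact absurd this (lt_irrefl l)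
      · rw [h, h']
  have adjf : ∀ i j, (rowIntersectionGraph M).Adj i j → f i = f j := by
    rintro i j ⟨-, p, h1, h2⟩; exact hkey i j p h1 h2
  have fadj : ∀ i j : Fin k, i ≠ j → f i = f j → (rowIntersectionGraph M).Adj i j := by
    intro i j hij hfij
    exact ⟨hij, f i, hfmem i, by rw [hfij]; exact hfmem j⟩
  have cconst : ∀ (m : ℕ), m ≠ 0 → ∀ c : ZMod m → Fin k,
      (∀ i, (rowIntersectionGraph M).Adj (c i) (c (i + 1))) →
      ∀ t : ZMod m, f (c t) = f (c 0) := by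
    intro m hm c hc t
    haveI : NeZero m := ⟨hm⟩
    have aux : ∀ a : ℕ, f (c (a : ZMod m)) = f (c 0) := by
      intro a
      induction a with
      | zero => simp
      | succ a ih =>
        have h1 : ((a + 1 : ℕ) : ZMod m) = (a : ZMod m) + 1 := by push_cast; ring
        rw [h1, ← (adjf _ _ (hc (a : ZMod m)))]
        exact ih
    have := aux t.val
    rwa [ZMod.natCast_rightInverse t] at this
  constructor
  · intro m hm c hinj hc
    haveI : NeZero m := ⟨by omega⟩
    refine ⟨0, 2, ?_, ?_, ?_⟩
    · have : ((2 : ℕ) : ZMod m) ≠ ((1 : ℕ) : ZMod m) :=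
        cast_ne_zmod (by omega) (by omega) (by omega)
      simpa using this
    · have h3 : (2 : ZMod m) + 1 = ((3 : ℕ) : ZMod m) := by push_cast; ring
      rw [h3]
      have : ((0 : ℕ) : ZMod m) ≠ ((3 : ℕ) : ZMod m) :=
        cast_ne_zmod (by omega) (by omega) (by omega)
      simpa using this
    · refine fadj _ _ (hinj.ne ?_) ?_
      · have : ((0 : ℕ) : ZMod m) ≠ ((2 : ℕ) : ZMod m) :=
          cast_ne_zmod (by omega) (by omega) (by omega)
        simpa using this
      · rw [cconst m (by omega) c hc 0, cconst m (by omega) c hc 2]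
  · intro m hm _ c hinj hc
    haveI : NeZero m := ⟨by omega⟩
    refine ⟨0, 3, ?_, ?_, ?_, ?_⟩
    · have : ((3 : ℕ) : ZMod m) ≠ ((1 : ℕ) : ZMod m) :=
        cast_ne_zmod (by omega) (by omega) (by omega)
      simpa using this
    · have h4 : (3 : ZMod m) + 1 = ((4 : ℕ) : ZMod m) := by push_cast; ring
      rw [h4]
      have : ((0 : ℕ) : ZMod m) ≠ ((4 : ℕ) : ZMod m) :=
        cast_ne_zmod (by omega) (by omega) (by omega)
      simpa using this
    · have h3 : ((3 : ZMod m) - 0) = ((3 : ℕ) : ZMod m) := by push_cast; ring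
      rw [h3, ZMod.val_cast_of_lt (by omega)]
      decide
    · refine fadj _ _ (hinj.ne ?_) ?_
      · have : ((0 : ℕ) : ZMod m) ≠ ((3 : ℕ) : ZMod m) :=
          cast_ne_zmod (by omega) (by omega) (by omega)
        simpa using this
      · rw [cconst m (by omega) c hc 0, cconst m (by omega) c hc 3]
end

section
/- Let M be a k×n matrix with entries in {0,1} that contains neither Δ1 = [[1,1],[0,1]] nor Δ2 = [[0,1],[1,1]] as a (not necessarily contiguous) 2×2 submatrix, and suppose every row of M has at least one entry equal to 1. Then there exist a finite tree T with root r and positive edge weights whose vertex set is the set of columns {v_0, ..., v_{n-1}}, with the vertices enumerated in order of nondecreasing weighted distance from r (p ≤ q implies d*(r,v_p) ≤ d*(r,v_q)), such that for every row i the support of row i (the set of columns p with M[i,p] = 1) induces a connected subgraph of T, and the resulting collection of subtrees {T_0, ..., T_{k-1}} is compatible. -/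
open SimpleGraph

section ParentTree

variable {n : ℕ} [NeZero n]

/-- The graph on `Fin n` determined by a parent function `f`. -/
def pgraph (f : Fin n → Fin n) : SimpleGraph (Fin n) where
  Adj a b := (f b = a ∧ a ≠ b) ∨ (f a = b ∧ b ≠ a)
  symm := by constructor; intro a b h; tauto
  loopless := by constructor; rintro a (⟨_, h⟩ | ⟨_, h⟩) <;> exact h rfl

variable {f : Fin n → Fin n}

lemma pg_adj_self (hf2 : ∀ p : Fin n, 0 < (p : ℕ) → (f p : ℕ) < p)
    {p : Fin n} (hp : p ≠ 0) : (pgraph f).Adj p (f p) := by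
  have hpv : 0 < (p : ℕ) := by
    rcases Nat.eq_zero_or_pos (p : ℕ) with h | h
    · exact absurd (Fin.ext (by simp [h])) hp
    · exact h
  exact Or.inr ⟨rfl, fun h => absurd (congrArg Fin.val h) (by have := hf2 p hpv; omega)⟩

lemma pg_adj_cases (hf1 : ∀ p : Fin n, (f p : ℕ) ≤ p)
    {a b : Fin n} (h : (pgraph f).Adj a b) :
    ((a : ℕ) < b ∧ f b = a) ∨ ((b : ℕ) < a ∧ f a = b) := by
  rcases h with ⟨h1, h2⟩ | ⟨h1, h2⟩
  · refine Or.inl ⟨?_, h1⟩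
    have hb := hf1 b
    rw [h1] at hb
    have : (a : ℕ) ≠ (b : ℕ) := fun hh => h2 (Fin.ext hh)
    omega
  · refine Or.inr ⟨?_, h1⟩
    have ha := hf1 a
    rw [h1] at ha
    have : (a : ℕ) ≠ (b : ℕ) := fun hh => h2 ((Fin.ext hh).symm)
    omega

/-- The canonical walk from a vertex to the root along parent pointers. -/
def walkToRoot (hf2 : ∀ p : Fin n, 0 < (p : ℕ) → (f p : ℕ) < p) (p : Fin n) :
    (pgraph f).Walk p 0 :=
  if h : p = 0 then Walk.nil.copy h.symm rfl
  else Walk.cons (pg_adj_self hf2 h) (walkToRoot hf2 (f p))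
termination_by (p : ℕ)
decreasing_by
  exact hf2 p (by
    rcases Nat.eq_zero_or_pos (p : ℕ) with h0 | h0
    · exact absurd (Fin.ext (by simp [h0])) h
    · exact h0)


lemma walkToRoot_support_le (hf2 : ∀ p : Fin n, 0 < (p : ℕ) → (f p : ℕ) < p) :
    ∀ N (p : Fin n), (p : ℕ) ≤ N → ∀ q ∈ (walkToRoot hf2 p).support, (q : ℕ) ≤ (p : ℕ) := by
  intro N
  induction N with
  | zero =>
    intro p hp q hq
    have hp0 : p = 0 := Fin.ext (by simpa using hp)
    rw [walkToRoot, dif_pos hp0] at hq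
    simp [Walk.support_copy] at hq
    simp [hq, hp0]
  | succ N ih =>
    intro p hp q hq
    by_cases h0 : p = 0
    · rw [walkToRoot, dif_pos h0] at hq
      simp [Walk.support_copy] at hq
      simp [hq, h0]
    · rw [walkToRoot, dif_neg h0] at hq
      rw [Walk.support_cons] at hq
      rcases List.mem_cons.mp hq with h | h
      · simp [h]
      · have hpv : 0 < (p : ℕ) := by
          rcases Nat.eq_zero_or_pos (p : ℕ) with hz | hz
          · exact absurd (Fin.ext (by simp [hz])) h0
          · exact hz
        have hlt := hf2 p hpv
        have := ih (f p) (by omega) q h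
        omega

lemma walkToRoot_isPath (hf2 : ∀ p : Fin n, 0 < (p : ℕ) → (f p : ℕ) < p) :
    ∀ N (p : Fin n), (p : ℕ) ≤ N → (walkToRoot hf2 p).IsPath := by
  intro N
  induction N with
  | zero =>
    intro p hp
    have hp0 : p = 0 := Fin.ext (by simpa using hp)
    rw [walkToRoot, dif_pos hp0]
    simp [Walk.isPath_copy]
  | succ N ih =>
    intro p hp
    by_cases h0 : p = 0
    · rw [walkToRoot, dif_pos h0]; simp [Walk.isPath_copy]
    · rw [walkToRoot, dif_neg h0]
      have hpv : 0 < (p : ℕ) := by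
        rcases Nat.eq_zero_or_pos (p : ℕ) with hz | hz
        · exact absurd (Fin.ext (by simp [hz])) h0
        · exact hz
      have hlt := hf2 p hpv
      rw [Walk.cons_isPath_iff]
      refine ⟨ih (f p) (by omega) , fun hmem => ?_⟩
      have := walkToRoot_support_le hf2 N (f p) (by omega) p hmem
      omega

/-- First-edge lemma: a path descending in value must start with the parent edge. -/
lemma path_first_edge (hf1 : ∀ p : Fin n, (f p : ℕ) ≤ p) :
    ∀ {x y : Fin n} (R : (pgraph f).Walk x y), R.IsPath → (y : ℕ) < (x : ℕ) →
      ∃ (e : (pgraph f).Adj x (f x)) (R' : (pgraph f).Walk (f x) y), R = Walk.cons e R' := by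
  intro x y R
  induction R with
  | nil => intro _ h; omega
  | @cons a z y e R' ih =>
    intro hp hlt
    rcases pg_adj_cases hf1 e with ⟨hlt2, hfz⟩ | ⟨hlt2, hfa⟩
    · -- a < z, f z = a : walk goes up; tail must come back through a
      have hR' : R'.IsPath := hp.of_cons
      have hy : (y : ℕ) < (z : ℕ) := by omega
      obtain ⟨e2, R'', hR''⟩ := ih hR' hy
      have : a ∈ R'.support := by
        rw [hR'', Walk.support_cons]
        exact List.mem_cons_of_mem _ (by rw [← hfz]; exact R''.start_mem_support)
      exact absurd this ((Walk.cons_isPath_iff _ _).mp hp).2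
    · -- f a = z
      subst hfa
      exact ⟨e, R', rfl⟩

lemma path_unique (hf1 : ∀ p : Fin n, (f p : ℕ) ≤ p) (hf2 : ∀ p : Fin n, 0 < (p : ℕ) → (f p : ℕ) < p) :
    ∀ N, ∀ (u v : Fin n), (u : ℕ) + (v : ℕ) ≤ N →
      ∀ (P Q : (pgraph f).Walk u v), P.IsPath → Q.IsPath → P = Q := by
  intro N
  induction N with
  | zero =>
    intro u v h P Q hP hQ
    have : u = v := Fin.ext (by omega)
    subst this
    rw [Walk.isPath_iff_eq_nil] at hP hQ
    rw [hP, hQ]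
  | succ N ih =>
    intro u v h P Q hP hQ
    rcases lt_trichotomy (u : ℕ) (v : ℕ) with hlt | heq | hgt
    · -- reverse
      obtain ⟨e1, P', hP'⟩ := path_first_edge hf1 P.reverse hP.reverse hlt
      obtain ⟨e2, Q', hQ'⟩ := path_first_edge hf1 Q.reverse hQ.reverse hlt
      have hfv : (f v : ℕ) < v := hf2 v (by omega)
      have hP'p : P'.IsPath := by
        have := hP.reverse; rw [hP'] at this; exact this.of_cons
      have hQ'p : Q'.IsPath := by
        have := hQ.reverse; rw [hQ'] at this; exact this.of_cons
      have : P' = Q' := ih (f v) u (by omega) P' Q' hP'p hQ'p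
      have hrev : P.reverse = Q.reverse := by rw [hP', hQ', this]
      have := congrArg Walk.reverse hrev
      simpa using this
    · have : u = v := Fin.ext heq
      subst this
      rw [Walk.isPath_iff_eq_nil] at hP hQ
      rw [hP, hQ]
    · obtain ⟨e1, P', hP'⟩ := path_first_edge hf1 P hP hgt
      obtain ⟨e2, Q', hQ'⟩ := path_first_edge hf1 Q hQ hgt
      have hfu : (f u : ℕ) < u := hf2 u (by omega)
      have hP'p : P'.IsPath := by rw [hP'] at hP; exact hP.of_cons
      have hQ'p : Q'.IsPath := by rw [hQ'] at hQ; exact hQ.of_cons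
      have : P' = Q' := ih (f u) v (by omega) P' Q' hP'p hQ'p
      rw [hP', hQ', this]

lemma pgraph_isTree (hf1 : ∀ p : Fin n, (f p : ℕ) ≤ p) (hf2 : ∀ p : Fin n, 0 < (p : ℕ) → (f p : ℕ) < p) : (pgraph f).IsTree := by
  constructor
  · rw [connected_iff]
    refine ⟨fun u v => ?_, ⟨0⟩⟩
    exact ⟨(walkToRoot hf2 u).append (walkToRoot hf2 v).reverse⟩
  · rw [isAcyclic_iff_path_unique]
    intro u v P Q
    exact Subtype.ext (path_unique hf1 hf2 ((u : ℕ) + (v : ℕ)) u v le_rfl P.1 Q.1 P.2 Q.2)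

/-- The weight function: absolute difference of endpoints. -/
noncomputable def pweight : Sym2 (Fin n) → ℝ :=
  Sym2.lift ⟨fun a b => |(a : ℝ) - (b : ℝ)|, fun a b => abs_sub_comm _ _⟩

lemma walkToRoot_sum (hf2 : ∀ p : Fin n, 0 < (p : ℕ) → (f p : ℕ) < p) :
    ∀ N (p : Fin n), (p : ℕ) ≤ N →
      (((walkToRoot hf2 p).edges.map pweight).sum) = (p : ℕ) := by
  intro N
  induction N with
  | zero =>
    intro p hp
    have hp0 : p = 0 := Fin.ext (by simpa using hp)
    rw [walkToRoot, dif_pos hp0]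
    simp [Walk.edges_copy, hp0]
  | succ N ih =>
    intro p hp
    by_cases h0 : p = 0
    · rw [walkToRoot, dif_pos h0]; simp [Walk.edges_copy, h0]
    · rw [walkToRoot, dif_neg h0]
      have hpv : 0 < (p : ℕ) := by
        rcases Nat.eq_zero_or_pos (p : ℕ) with hz | hz
        · exact absurd (Fin.ext (by simp [hz])) h0
        · exact hz
      have hlt := hf2 p hpv
      rw [Walk.edges_cons, List.map_cons, List.sum_cons, ih (f p) (by omega)]
      have : pweight (s(p, f p)) = ((p : ℕ) : ℝ) - ((f p : ℕ) : ℝ) := by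
        show |((p : ℕ) : ℝ) - ((f p : ℕ) : ℝ)| = _
        rw [abs_of_nonneg]
        have : ((f p : ℕ) : ℝ) ≤ ((p : ℕ) : ℝ) := by exact_mod_cast le_of_lt hlt
        linarith
      rw [this]
      ring

lemma pgraph_wdist (hf1 : ∀ p : Fin n, (f p : ℕ) ≤ p) (hf2 : ∀ p : Fin n, 0 < (p : ℕ) → (f p : ℕ) < p) (hc : (pgraph f).Connected) (p : Fin n) :
    wdist (pgraph f) hc pweight 0 p = (p : ℕ) := by
  unfold wdist
  have key : ∀ (Q : (pgraph f).Walk 0 p), Q.IsPath →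
      ((Q.edges.map pweight).sum) = (p : ℕ) := by
    intro Q hQ
    have hwp : (walkToRoot hf2 p).IsPath := walkToRoot_isPath hf2 (p : ℕ) p le_rfl
    have hQeq : Q = (walkToRoot hf2 p).reverse :=
      path_unique hf1 hf2 (((0 : Fin n) : ℕ) + (p : ℕ)) 0 p le_rfl Q
        (walkToRoot hf2 p).reverse hQ hwp.reverse
    rw [hQeq, Walk.edges_reverse, List.map_reverse, List.sum_reverse]
    exact walkToRoot_sum hf2 (p : ℕ) p le_rfl
  exact key _ (Subtype.prop _)

end ParentTree


/-- From a 0-1 matrix with no `Δ₁` or `Δ₂` submatrix, each of whose rows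
contains a `1`, one can build a rooted, positively edge-weighted tree on the columns,
enumerated in order of nondecreasing weighted distance from the root, such that each row's
support is a subtree and the resulting collection of subtrees is compatible. -/
theorem exists_tree_of_delta_free_matrix
    {k n : ℕ} (hn : 0 < n) (M : Fin k → Fin n → ℕ)
    (h01 : ∀ i j, M i j = 0 ∨ M i j = 1)
    (hΔ1 : ¬ HasDelta1 M) (hΔ2 : ¬ HasDelta2 M)
    (hrow : ∀ i : Fin k, ∃ p : Fin n, M i p = 1) :
    ∃ (T : SimpleGraph (Fin n)) (hT : T.IsTree) (r : Fin n) (w : Sym2 (Fin n) → ℝ),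
      (∀ e ∈ T.edgeSet, 0 < w e) ∧
      (∀ p q : Fin n, p ≤ q →
        wdist T hT.isConnected w r p ≤ wdist T hT.isConnected w r q) ∧
      (∀ i : Fin k, IsSubtree T {p : Fin n | M i p = 1}) ∧
      (∀ i j : Fin k,
        FullWrt T hT.isConnected w r {p | M i p = 1} {p | M j p = 1} ∨
        FullWrt T hT.isConnected w r {p | M j p = 1} {p | M i p = 1}) := by
  haveI : NeZero n := ⟨hn.ne'⟩
  classical
  -- rows sharing a `1` at column `v` agree on all earlier columns
  have agree : ∀ (i j : Fin k) (v q : Fin n), M i v = 1 → M j v = 1 → q < v →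
      M i q = M j q := by
    intro i j v q hiv hjv hqv
    rcases eq_or_ne i j with rfl | hij
    · rfl
    rcases h01 i q with hiq | hiq <;> rcases h01 j q with hjq | hjq
    · rw [hiq, hjq]
    · rcases hij.lt_or_gt with h | h
      · exact absurd ⟨i, j, q, v, h, hqv, hiq, hiv, hjq, hjv⟩ hΔ2
      · exact absurd ⟨j, i, q, v, h, hqv, hjq, hjv, hiq, hiv⟩ hΔ1
    · rcases hij.lt_or_gt with h | h
      · exact absurd ⟨i, j, q, v, h, hqv, hiq, hiv, hjq, hjv⟩ hΔ1
      · exact absurd ⟨j, i, q, v, h, hqv, hjq, hjv, hiq, hiv⟩ hΔ2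
    · rw [hiq, hjq]
  -- the parent function
  set F : Fin n → Finset (Fin n) :=
    fun v => Finset.univ.filter (fun q => q < v ∧ ∃ i, M i v = 1 ∧ M i q = 1) with hF
  set f : Fin n → Fin n := fun v =>
    if h : (F v).Nonempty then (F v).max' h
    else ⟨v.val - 1, Nat.lt_of_le_of_lt (Nat.sub_le _ _) v.isLt⟩ with hfdef
  have hmax : ∀ (v : Fin n) (h : (F v).Nonempty), (F v).max' h < v ∧
      ∃ i, M i v = 1 ∧ M i ((F v).max' h) = 1 := by
    intro v h
    have := Finset.max'_mem (F v) h
    simp only [hF, Finset.mem_filter] at this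
    exact this.2
  have hf1 : ∀ p : Fin n, (f p : ℕ) ≤ p := by
    intro p
    rw [hfdef]
    dsimp only
    split_ifs with h
    · exact Nat.le_of_lt ((hmax p h).1)
    · exact Nat.sub_le _ _
  have hf2 : ∀ p : Fin n, 0 < (p : ℕ) → (f p : ℕ) < p := by
    intro p hp
    rw [hfdef]
    dsimp only
    split_ifs with h
    · exact (hmax p h).1
    · simpa using Nat.sub_lt hp Nat.one_pos
  -- the parent of a support element stays in the support
  have hfmem : ∀ (i : Fin k) (v q : Fin n), M i v = 1 → q < v → M i q = 1 →
      M i (f v) = 1 := by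
    intro i v q hiv hqv hiq
    have hmem : q ∈ F v := by
      simp only [hF, Finset.mem_filter]
      exact ⟨Finset.mem_univ _, hqv, i, hiv, hiq⟩
    have hne : (F v).Nonempty := ⟨q, hmem⟩
    have hfv : f v = (F v).max' hne := by rw [hfdef]; dsimp only; rw [dif_pos hne]
    obtain ⟨hlt, j, hjv, hjm⟩ := hmax v hne
    rw [hfv]
    rcases eq_or_ne i j with rfl | hij
    · exact hjm
    · rw [agree i j v _ hiv hjv hlt]
      exact hjm
  have hflt : ∀ (i : Fin k) (v q : Fin n), M i v = 1 → q < v → M i q = 1 → f v < v := by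
    intro i v q hiv hqv hiq
    have : 0 < (v : ℕ) := lt_of_le_of_lt (Nat.zero_le _) hqv
    exact hf2 v this
  have hT : (pgraph f).IsTree := pgraph_isTree hf1 hf2
  have hwd : ∀ p : Fin n, wdist (pgraph f) hT.isConnected pweight 0 p = (p : ℕ) :=
    pgraph_wdist hf1 hf2 hT.isConnected
  refine ⟨pgraph f, hT, 0, pweight, ?_, ?_, ?_, ?_⟩
  · -- positivity of weights
    intro e he
    induction e using Sym2.ind with
    | _ a b =>
      rw [mem_edgeSet] at he
      have hab : a ≠ b := he.ne
      have : ((a : ℕ) : ℝ) ≠ ((b : ℕ) : ℝ) := by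
        exact_mod_cast fun h => hab (Fin.ext h)
      show (0 : ℝ) < |((a : ℕ) : ℝ) - ((b : ℕ) : ℝ)|
      exact abs_pos.mpr (sub_ne_zero.mpr this)
  · -- monotone distances
    intro p q hpq
    rw [hwd, hwd]
    exact_mod_cast hpq
  · -- each row support is a subtree
    intro i
    obtain ⟨p0, hp0⟩ := hrow i
    refine ⟨⟨p0, hp0⟩, ?_⟩
    set Fi : Finset (Fin n) := Finset.univ.filter (fun p => M i p = 1) with hFi
    have hFine : Fi.Nonempty := ⟨p0, by simp only [hFi, Finset.mem_filter]; exact ⟨Finset.mem_univ _, hp0⟩⟩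
    set m : Fin n := Fi.min' hFine with hm
    have hmS : M i m = 1 := by
      have := Fi.min'_mem hFine
      simp only [hFi, Finset.mem_filter] at this
      exact this.2
    have reach : ∀ (N : ℕ) (v : Fin n), (v : ℕ) ≤ N → ∀ (hv : M i v = 1),
        ((pgraph f).induce {p : Fin n | M i p = 1}).Reachable
          ⟨m, hmS⟩ ⟨v, hv⟩ := by
      intro N
      induction N with
      | zero =>
        intro v hvN hv
        have hmv : m ≤ v := Fi.min'_le v (by simp only [hFi, Finset.mem_filter]; exact ⟨Finset.mem_univ _, hv⟩)
        have : m = v := Fin.ext (by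
          have : (m : ℕ) ≤ (v : ℕ) := hmv
          omega)
        subst this
        exact Reachable.refl _
      | succ N ih =>
        intro v hvN hv
        rcases eq_or_ne m v with heq | hne
        · subst heq; exact Reachable.refl _
        · have hmv : m ≤ v := Fi.min'_le v (by simp only [hFi, Finset.mem_filter]; exact ⟨Finset.mem_univ _, hv⟩)
          have hmlt : m < v := lt_of_le_of_ne hmv hne
          have hfv : M i (f v) = 1 := hfmem i v m hv hmlt hmS
          have hfvlt : f v < v := hflt i v m hv hmlt hmS
          have hstep := ih (f v) (by
            have h1 : (f v : ℕ) < (v : ℕ) := hfvlt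
            omega) hfv
          refine hstep.trans (SimpleGraph.Adj.reachable ?_)
          show (pgraph f).Adj (f v) v
          exact Or.inl ⟨rfl, fun h => absurd (congrArg Fin.val h) (by
            have : (f v : ℕ) < (v : ℕ) := hfvlt
            omega)⟩
    rw [connected_iff]
    constructor
    · rintro ⟨u, hu⟩ ⟨v, hv⟩
      exact (reach (u : ℕ) u le_rfl hu).symm.trans (reach (v : ℕ) v le_rfl hv)
    · exact ⟨⟨m, hmS⟩⟩
  · -- compatibility
    intro i j
    left
    intro u hu v hv hle hvA
    rw [hwd, hwd] at hle
    have huv : (u : ℕ) ≤ (v : ℕ) := by exact_mod_cast hle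
    rcases eq_or_lt_of_le huv with heq | hlt
    · have : u = v := Fin.ext heq
      subst this
      exact hvA
    · have hiv : M i v = 1 := hvA
      have hjv : M j v = 1 := hv
      have hju : M j u = 1 := hu
      have : M i u = M j u := agree i j v u hiv hjv hlt
      show M i u = 1
      rw [this, hju]
end
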